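/- If q* is chosen as the ⌊(M+1)(1−α)⌋-th smallest element of M exchangeable scores s₁,…,s_M (and the new score s_{M+1} is exchangeable with them, ties occurring with probability zero), then the prediction box [f^{α/2}(w) − q*𝟏, f^{1−α/2}(w) + q*𝟏] contains the true y with probability at least ⌊(M+1)(1−α)⌋/(M+1). -/

import Mathlib

open MeasureTheory ProbabilityTheory Finset
open scoped ENNReal

/-!
Let `ν` be the law of the score vector `(s₁, …, s_{M+1})`. Exchangeability and the absence of
ties make the rank of each coordinate uniform: the events `{rank of sⱼ < k}` all have the same
probability, and for every tie-free vector exactly `k` of them occur, so each has probability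
`k / (M + 1)`. When the fresh score has rank `< k`, at most `k - 1` calibration scores lie below
it, so it does not exceed the `k`-th smallest calibration score `q*`; and a box score `≤ q*`
means exactly that `y` lies in the box inflated by `q*`.
-/

namespace List

theorem Pairwise.le_getElem_of_countP_lt_le {α : Type*} [LinearOrder α] {l : List α}
    (hl : l.Pairwise (· ≤ ·)) {s : α} {k : ℕ} (hk : k < l.length)
    (hcount : l.countP (· < s) ≤ k) : s ≤ l[k] := by
  induction l generalizing k with
  | nil => simp at hk
  | cons a t ih =>
    by_contra! hlt
    cases k with
    | zero =>
      simp only [getElem_cons_zero] at hlt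
      simp [hlt] at hcount
    | succ k =>
      have hat : a < s := (rel_of_pairwise_cons hl (getElem_mem _)).trans_lt hlt
      have := ih hl.of_cons (by simpa using hk) (by simpa [countP_cons, hat] using hcount)
      exact this.not_gt hlt

theorem countP_ofFn {α : Type*} {n : ℕ} (f : Fin n → α) (p : α → Prop) [DecidablePred p] :
    (ofFn f).countP (p ·) = #{i | p (f i)} := by
  rw [← Multiset.coe_countP, ← Fin.univ_val_map, Multiset.countP_map]
  rfl

theorem le_getD_insertionSort_of_countP_lt {α : Type*} [LinearOrder α] {l : List α} {s d : α}
    {k : ℕ} (hk : k ≤ l.length) (hcount : l.countP (· < s) < k) :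
    s ≤ (l.insertionSort (· ≤ ·)).getD (k - 1) d := by
  have hk' : k - 1 < (l.insertionSort (· ≤ ·)).length := by
    rw [length_insertionSort]
    omega
  rw [getD_eq_getElem _ _ hk']
  refine (pairwise_insertionSort _ _).le_getElem_of_countP_lt_le hk' ?_
  rw [(perm_insertionSort _ _).countP_eq]
  omega

end List

theorem ae_injective_of_measure_ties_eq_zero {ι β : Type*} [Countable ι] [MeasurableSpace β]
    {ν : Measure (ι → β)} (hties : ∀ i j, i ≠ j → ν {v | v i = v j} = 0) :
    ∀ᵐ v ∂ν, Function.Injective v := by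
  have hne : ∀ᵐ v ∂ν, ∀ i j, i ≠ j → v i ≠ v j := by
    simp only [ae_all_iff]
    intro i j
    by_cases hij : i = j
    · simp [hij]
    · simpa [hij, ae_iff] using hties i j hij
  filter_upwards [hne] with v hv i j hij
  by_contra h
  exact hv i j h hij

section Rank

variable {ι α : Type*} [Fintype ι] [LinearOrder α]

/-- For injective `v`, the position of `v j` in increasing order, counted from `0`. -/
def rank (v : ι → α) (j : ι) : ℕ := #{i | v i < v j}

theorem rank_comp_perm (v : ι → α) (σ : Equiv.Perm ι) (j : ι) :
    rank (v ∘ σ) j = rank v (σ j) := by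
  rw [rank, rank, ← Fintype.card_subtype, ← Fintype.card_subtype]
  exact Fintype.card_congr (σ.subtypeEquiv fun _ => Iff.rfl)

theorem measurable_rank (j : ι) : Measurable fun v : ι → ℝ => rank v j := by
  simp only [rank, card_filter]
  exact Finset.measurable_sum _ fun i _ =>
    Measurable.ite (measurableSet_lt (measurable_pi_apply i) (measurable_pi_apply j))
      measurable_const measurable_const

theorem rank_lt_card (v : ι → α) (j : ι) : rank v j < Fintype.card ι :=
  card_lt_univ_of_notMem (s := {i | v i < v j}) (x := j) (by simp)

theorem rank_lt_rank {v : ι → α} {i j : ι} (h : v i < v j) : rank v i < rank v j := by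
  refine card_lt_card ⟨fun a ha => ?_, fun hsub => ?_⟩
  · simp only [mem_filter, mem_univ, true_and] at ha ⊢
    exact ha.trans h
  · have hii := hsub (by simpa using h)
    simp at hii

theorem bijective_rank {v : ι → α} (hv : Function.Injective v) :
    Function.Bijective fun j => (⟨rank v j, rank_lt_card v j⟩ : Fin (Fintype.card ι)) := by
  refine (Fintype.bijective_iff_injective_and_card _).2 ⟨fun i j hij => ?_, by simp⟩
  by_contra hne
  rcases (hv.ne hne).lt_or_gt with h | h
  · exact (rank_lt_rank h).ne (Fin.val_eq_of_eq hij)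
  · exact (rank_lt_rank h).ne' (Fin.val_eq_of_eq hij)

theorem card_rank_lt {v : ι → α} (hv : Function.Injective v) {k : ℕ}
    (hk : k ≤ Fintype.card ι) : #{j | rank v j < k} = k := by
  let lowRanks : {r : Fin (Fintype.card ι) // (r : ℕ) < k} ≃ Fin k :=
    { toFun := fun r => ⟨r.1, r.2⟩, invFun := fun r => ⟨⟨r, r.2.trans_le hk⟩, r.2⟩ }
  rw [← Fintype.card_subtype]
  exact (Fintype.card_congr (((Equiv.ofBijective _ (bijective_rank hv)).subtypeEquiv
    fun _ => Iff.rfl).trans lowRanks)).trans (Fintype.card_fin k)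

theorem measure_rank_lt {ν : Measure (ι → ℝ)} [IsProbabilityMeasure ν]
    (hperm : ∀ σ : Equiv.Perm ι, ν.map (fun v => v ∘ σ) = ν)
    (hties : ∀ i j, i ≠ j → ν {v | v i = v j} = 0) {k : ℕ} (hk : k ≤ Fintype.card ι)
    (j : ι) : ν {v | rank v j < k} = k / Fintype.card ι := by
  classical
  have hmeas : ∀ i, MeasurableSet {v : ι → ℝ | rank v i < k} := fun i =>
    measurableSet_lt (measurable_rank i) measurable_const
  have hequal : ∀ i, ν {v | rank v i < k} = ν {v | rank v j < k} := by
    intro i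
    have h := Measure.map_apply (by fun_prop) (hmeas i) (μ := ν) (f := (· ∘ Equiv.swap i j))
    rw [hperm, Set.preimage_ofPred_eq] at h
    simp_rw [h, rank_comp_perm, Equiv.swap_apply_left]
  have hsum : ∑ i, ν {v | rank v i < k} = k := by
    calc ∑ i, ν {v | rank v i < k}
        = ∫⁻ v, ∑ i, {v : ι → ℝ | rank v i < k}.indicator 1 v ∂ν := by
          rw [lintegral_finsetSum _ fun i _ => measurable_one.indicator (hmeas i)]
          simp_rw [lintegral_indicator_one (hmeas _)]
      _ = ∫⁻ _, (k : ℝ≥0∞) ∂ν := by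
          refine lintegral_congr_ae ?_
          filter_upwards [ae_injective_of_measure_ties_eq_zero hties] with v hv
          simp [Set.indicator_apply, sum_boole, card_rank_lt hv hk]
      _ = k := by simp
  have : Nonempty ι := ⟨j⟩
  have hcard : (Fintype.card ι : ℝ≥0∞) ≠ 0 := by simp
  rw [ENNReal.eq_div_iff hcard (by simp), ← hsum]
  simp [hequal]

theorem rank_last_eq_countP {M : ℕ} (v : Fin (M + 1) → α) :
    rank v (Fin.last M) =
      (List.ofFn fun i : Fin M => v i.castSucc).countP (· < v (Fin.last M)) := by
  rw [List.countP_ofFn, rank, card_filter, card_filter, Fin.sum_univ_castSucc]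
  simp

end Rank

theorem mem_Icc_of_iSup_max_sub_le {ι : Type*} [Finite ι] {lo hi y : ι → ℝ} {q : ℝ}
    (h : ⨆ i, max (lo i - y i) (y i - hi i) ≤ q) (i : ι) :
    y i ∈ Set.Icc (lo i - q) (hi i + q) := by
  have hmax := (le_ciSup (Set.finite_range _).bddAbove i).trans h
  exact ⟨by linarith [le_max_left (lo i - y i) (y i - hi i)],
    by linarith [le_max_right (lo i - y i) (y i - hi i)]⟩

theorem conformal_box_coverage_general
    {Ω 𝕎 : Type*} [MeasurableSpace Ω] (μ : Measure Ω) [IsProbabilityMeasure μ]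
    (M m : ℕ)
    (α : ℝ)
    (S : Fin (M + 1) → Ω → ℝ)
    (hexch : ∀ σ : Equiv.Perm (Fin (M + 1)),
      IdentDistrib (fun ω => fun i => S (σ i) ω) (fun ω => fun i => S i ω) μ μ)
    (hties : ∀ i j, i ≠ j → μ {ω | S i ω = S j ω} = 0)
    (W : Ω → 𝕎) (Y : Ω → Fin m → ℝ) (flo fhi : 𝕎 → Fin m → ℝ)
    (hscore : ∀ ω, S (Fin.last M) ω =
      sSup (Set.range fun i : Fin m => max (flo (W ω) i - Y ω i) (Y ω i - fhi (W ω) i)))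
    (qstar : Ω → ℝ)
    (hq : ∀ ω, qstar ω =
      (List.insertionSort (· ≤ ·) (List.ofFn fun i : Fin M => S i.castSucc ω)).getD
        (⌊((M : ℝ) + 1) * (1 - α)⌋₊ - 1) 0)
    (hkM : ⌊((M : ℝ) + 1) * (1 - α)⌋₊ ≤ M) :
    ENNReal.ofReal ((⌊((M : ℝ) + 1) * (1 - α)⌋₊ : ℝ) / ((M : ℝ) + 1)) ≤
      μ {ω | ∀ i, Y ω i ∈ Set.Icc (flo (W ω) i - qstar ω) (fhi (W ω) i + qstar ω)} := by
  set k := ⌊((M : ℝ) + 1) * (1 - α)⌋₊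
  set X : Ω → Fin (M + 1) → ℝ := fun ω i => S i ω
  have hX : AEMeasurable X μ := (hexch 1).aemeasurable_snd
  have : IsProbabilityMeasure (μ.map X) := Measure.isProbabilityMeasure_map hX
  have hlaw : μ.map X {v | rank v (Fin.last M) < k} = k / Fintype.card (Fin (M + 1)) := by
    refine measure_rank_lt (fun σ => ?_) (fun i j hij => ?_) (by simpa using hkM.trans M.le_succ) _
    · have hσ : Measurable fun v : Fin (M + 1) → ℝ => v ∘ σ := by fun_prop
      rw [AEMeasurable.map_map_of_aemeasurable hσ.aemeasurable hX]
      exact (hexch σ).map_eq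
    · rw [Measure.map_apply_of_aemeasurable hX
        (measurableSet_eq_fun (measurable_pi_apply i) (measurable_pi_apply j))]
      exact hties i j hij
  rw [Measure.map_apply_of_aemeasurable hX
    (measurableSet_lt (measurable_rank _) measurable_const), Fintype.card_fin] at hlaw
  calc ENNReal.ofReal ((k : ℝ) / ((M : ℝ) + 1))
      = k / (M + 1 : ℕ) := by
        rw [ENNReal.ofReal_div_of_pos (by positivity)]
        exact_mod_cast
          congrArg₂ (· / ·) (ENNReal.ofReal_natCast k) (ENNReal.ofReal_natCast (M + 1))
    _ = μ (X ⁻¹' {v | rank v (Fin.last M) < k}) := hlaw.symm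
    _ ≤ _ := measure_mono fun ω hω => mem_Icc_of_iSup_max_sub_le <| (hscore ω).symm.trans_le <|
        (hq ω).symm ▸ List.le_getD_insertionSort_of_countP_lt (by simpa)
          (rank_last_eq_countP (X ω) ▸ hω)

/-- split conformal prediction with the box score. If `q*` is the
`⌊(M+1)(1−α)⌋`-th smallest of `M` calibration scores, the scores together with the
fresh score are exchangeable with no ties a.s., and the fresh score is the box
nonconformity score of `(W, Y)`, then the inflated prediction box contains `Y`
with probability at least `⌊(M+1)(1−α)⌋/(M+1)`. -/
theorem conformal_box_coverage
    {Ω 𝕎 : Type*} [MeasurableSpace Ω] (μ : Measure Ω) [IsProbabilityMeasure μ]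
    (M m : ℕ) (hM : 1 ≤ M) (hm : 0 < m)
    (α : ℝ) (hα : α ∈ Set.Ioo (0 : ℝ) 1)
    (S : Fin (M + 1) → Ω → ℝ)
    (hexch : ∀ σ : Equiv.Perm (Fin (M + 1)),
      IdentDistrib (fun ω => fun i => S (σ i) ω) (fun ω => fun i => S i ω) μ μ)
    (hties : ∀ i j, i ≠ j → μ {ω | S i ω = S j ω} = 0)
    (W : Ω → 𝕎) (Y : Ω → Fin m → ℝ) (flo fhi : 𝕎 → Fin m → ℝ)
    (hscore : ∀ ω, S (Fin.last M) ω =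
      sSup (Set.range fun i : Fin m => max (flo (W ω) i - Y ω i) (Y ω i - fhi (W ω) i)))
    (qstar : Ω → ℝ)
    (hq : ∀ ω, qstar ω =
      (List.insertionSort (· ≤ ·) (List.ofFn fun i : Fin M => S i.castSucc ω)).getD
        (⌊((M : ℝ) + 1) * (1 - α)⌋₊ - 1) 0)
    (hk1 : 1 ≤ ⌊((M : ℝ) + 1) * (1 - α)⌋₊)
    (hkM : ⌊((M : ℝ) + 1) * (1 - α)⌋₊ ≤ M) :
    ENNReal.ofReal ((⌊((M : ℝ) + 1) * (1 - α)⌋₊ : ℝ) / ((M : ℝ) + 1)) ≤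
      μ {ω | ∀ i, Y ω i ∈ Set.Icc (flo (W ω) i - qstar ω) (fhi (W ω) i + qstar ω)} :=
  conformal_box_coverage_general μ M m α S hexch hties W Y flo fhi hscore qstar hq hkM
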